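/- Let H be a strongly regular graph on n vertices with spectrum {ν, μ^{k_μ}, λ^{k_λ}} where ν > μ > λ, satisfying λ(ν − λ) = −n. Then the cone K_1 ∇ H (join of a single vertex with H) has exactly three distinct eigenvalues, its main eigenvalues are its largest eigenvalue ρ and λ, and μ is non-main in K_1 ∇ H. -/
import Mathlib


open Matrix

noncomputable def eigSpace {m : Type*} [Fintype m] [DecidableEq m]
    (A : Matrix m m ℝ) (lam : ℝ) : Submodule ℝ (m → ℝ) :=
  LinearMap.ker (Matrix.mulVecLin (A - lam • (1 : Matrix m m ℝ)))

/-- `lam` is an eigenvalue of the real matrix `A`. -/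
def IsEig {m : Type*} [Fintype m] [DecidableEq m] (A : Matrix m m ℝ) (lam : ℝ) : Prop :=
  eigSpace A lam ≠ ⊥

/-- The multiplicity of `lam` as an eigenvalue of `A`. -/
noncomputable def multE {m : Type*} [Fintype m] [DecidableEq m]
    (A : Matrix m m ℝ) (lam : ℝ) : ℕ :=
  Module.finrank ℝ (eigSpace A lam)

/-- `lam` is a main eigenvalue of `A`: its eigenspace is not orthogonal to the all-ones
vector. -/
def IsMainEig {m : Type*} [Fintype m] [DecidableEq m] (A : Matrix m m ℝ) (lam : ℝ) : Prop :=
  ∃ x ∈ eigSpace A lam, ∑ i, x i ≠ 0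

/-- The adjacency matrix of the subgraph of `G` induced by the vertex set `S`. -/
def indMatrix {n : ℕ} (G : SimpleGraph (Fin n)) [DecidableRel G.Adj] (S : Finset (Fin n)) :
    Matrix S S ℝ :=
  (G.adjMatrix ℝ).submatrix (fun i => (i : Fin n)) (fun j => (j : Fin n))

/-- `X` is a `lam`-star set of `G`: its cardinality equals the multiplicity of `lam`
and `lam` is not an eigenvalue of the subgraph induced by the complement of `X`. -/
def IsStarSet {n : ℕ} (G : SimpleGraph (Fin n)) [DecidableRel G.Adj] (lam : ℝ)
    (X : Finset (Fin n)) : Prop :=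
  X.card = multE (G.adjMatrix ℝ) lam ∧ ¬ IsEig (indMatrix G Xᶜ) lam

/-- The block `N` of the adjacency matrix: rows indexed by `Xᶜ`, columns by `X`. -/
def Nmat {n : ℕ} (G : SimpleGraph (Fin n)) [DecidableRel G.Adj] (X : Finset (Fin n)) :
    Matrix ↥(Xᶜ) ↥X ℝ :=
  (G.adjMatrix ℝ).submatrix (fun i => (i : Fin n)) (fun j => (j : Fin n))

/-- The block `C` of the adjacency matrix: the adjacency matrix of `G - X`. -/
def Cmat {n : ℕ} (G : SimpleGraph (Fin n)) [DecidableRel G.Adj] (X : Finset (Fin n)) :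
    Matrix ↥(Xᶜ) ↥(Xᶜ) ℝ :=
  indMatrix G Xᶜ

/-- The cone over H: a new vertex (none) joined to every vertex of H. -/
def cone {n : ℕ} (H : SimpleGraph (Fin n)) : SimpleGraph (Option (Fin n)) :=
  SimpleGraph.fromRel (fun x y => x = none ∨ ∃ a b, x = some a ∧ y = some b ∧ H.Adj a b)

open scoped Classical in
/-- The adjacency matrix of the cone over H. -/
noncomputable def coneM {n : ℕ} (H : SimpleGraph (Fin n)) :
    Matrix (Option (Fin n)) (Option (Fin n)) ℝ :=
  fun x y => if (cone H).Adj x y then 1 else 0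

lemma mem_eigSpace {m : Type*} [Fintype m] [DecidableEq m] (A : Matrix m m ℝ) (t : ℝ)
    (x : m → ℝ) : x ∈ eigSpace A t ↔ A.mulVec x = t • x := by
  simp [eigSpace, LinearMap.mem_ker, mulVecLin_apply, sub_mulVec, smul_mulVec,
    one_mulVec, sub_eq_zero]

lemma isEig_iff {m : Type*} [Fintype m] [DecidableEq m] (A : Matrix m m ℝ) (t : ℝ) :
    IsEig A t ↔ ∃ x, x ≠ 0 ∧ A.mulVec x = t • x := by
  rw [IsEig, Submodule.ne_bot_iff]
  constructor
  · rintro ⟨x, hx, hx0⟩; exact ⟨x, hx0, (mem_eigSpace A t x).1 hx⟩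
  · rintro ⟨x, hx0, hx⟩; exact ⟨x, (mem_eigSpace A t x).2 hx, hx0⟩

lemma cone_adj {n : ℕ} (H : SimpleGraph (Fin n)) (x y : Option (Fin n)) :
    (cone H).Adj x y ↔ x ≠ y ∧
      ((x = none ∨ ∃ a b, x = some a ∧ y = some b ∧ H.Adj a b) ∨
       (y = none ∨ ∃ a b, y = some a ∧ x = some b ∧ H.Adj a b)) := by
  simp [cone, SimpleGraph.fromRel_adj]

lemma coneM_none_none {n : ℕ} (H : SimpleGraph (Fin n)) : coneM H none none = 0 := by
  simp [coneM, cone]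

lemma coneM_none_some {n : ℕ} (H : SimpleGraph (Fin n)) (j : Fin n) :
    coneM H none (some j) = 1 := by
  simp [coneM, cone, SimpleGraph.fromRel_adj]

lemma coneM_some_none {n : ℕ} (H : SimpleGraph (Fin n)) (i : Fin n) :
    coneM H (some i) none = 1 := by
  simp [coneM, cone, SimpleGraph.fromRel_adj]

lemma coneM_some_some {n : ℕ} (H : SimpleGraph (Fin n)) [DecidableRel H.Adj] (i j : Fin n) :
    coneM H (some i) (some j) = H.adjMatrix ℝ i j := by
  by_cases h : H.Adj i j
  · rw [coneM, if_pos, SimpleGraph.adjMatrix_apply, if_pos h]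
    rw [cone_adj]
    exact ⟨by simp [h.ne], Or.inl (Or.inr ⟨i, j, rfl, rfl, h⟩)⟩
  · rw [coneM, if_neg, SimpleGraph.adjMatrix_apply, if_neg h]
    rw [cone_adj]
    rintro ⟨hne, (h' | h')⟩ <;> rcases h' with h' | ⟨a, b, ha, hb, hab⟩ <;>
      simp_all [H.adj_comm]

lemma coneM_mulVec_none {n : ℕ} (H : SimpleGraph (Fin n)) (x : Option (Fin n) → ℝ) :
    (coneM H).mulVec x none = ∑ j, x (some j) := by
  simp only [mulVec, dotProduct, Fintype.sum_option, coneM_none_none, coneM_none_some,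
    zero_mul, one_mul, zero_add]

lemma coneM_mulVec_some {n : ℕ} (H : SimpleGraph (Fin n)) [DecidableRel H.Adj]
    (x : Option (Fin n) → ℝ) (i : Fin n) :
    (coneM H).mulVec x (some i) = x none + (H.adjMatrix ℝ).mulVec (fun j => x (some j)) i := by
  simp only [mulVec, dotProduct, Fintype.sum_option, coneM_some_none, coneM_some_some, one_mul]

lemma sum_adj_col {n : ℕ} (H : SimpleGraph (Fin n)) [DecidableRel H.Adj] {d : ℕ}
    (hreg : H.IsRegularOfDegree d) (j : Fin n) :
    ∑ i, H.adjMatrix ℝ i j = (d : ℝ) := by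
  have h1 : ∑ i, H.adjMatrix ℝ i j = ∑ i, H.adjMatrix ℝ j i := by
    refine Finset.sum_congr rfl fun i _ => ?_
    simp [SimpleGraph.adjMatrix_apply, H.adj_comm]
  have h2 : ∑ i, H.adjMatrix ℝ j i = (H.neighborFinset j).card := by
    simp [SimpleGraph.adjMatrix_apply, SimpleGraph.neighborFinset_eq_filter]
  rw [h1, h2]
  rw [← SimpleGraph.degree]
  exact_mod_cast hreg j

lemma sum_mulVec_adj {n : ℕ} (H : SimpleGraph (Fin n)) [DecidableRel H.Adj] {d : ℕ}
    (hreg : H.IsRegularOfDegree d) (y : Fin n → ℝ) :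
    ∑ i, (H.adjMatrix ℝ).mulVec y i = d * ∑ i, y i := by
  calc ∑ i, (H.adjMatrix ℝ).mulVec y i = ∑ j, (∑ i, H.adjMatrix ℝ i j) * y j := by
        simp only [mulVec, dotProduct]
        rw [Finset.sum_comm]
        exact Finset.sum_congr rfl fun j _ => (Finset.sum_mul _ _ _).symm
    _ = d * ∑ i, y i := by
        rw [Finset.mul_sum]
        exact Finset.sum_congr rfl fun j _ => by rw [sum_adj_col H hreg j]

lemma compl_adjMatrix_eq {n : ℕ} (H : SimpleGraph (Fin n)) [DecidableRel H.Adj] :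
    (Hᶜ.adjMatrix ℝ) = Matrix.of (fun _ _ => (1:ℝ)) - 1 - H.adjMatrix ℝ := by
  ext i j
  simp only [SimpleGraph.adjMatrix_apply, SimpleGraph.compl_adj, Matrix.sub_apply,
    Matrix.of_apply, Matrix.one_apply]
  by_cases h : i = j
  · simp [h]
  · by_cases h2 : H.Adj i j <;> simp [h, h2]

lemma srg_quad {n d a b : ℕ} (H : SimpleGraph (Fin n)) [DecidableRel H.Adj]
    (hsrg : H.IsSRGWith n d a b) (t : ℝ) (w : Fin n → ℝ)
    (hw : (H.adjMatrix ℝ).mulVec w = t • w) (hsum : ∑ i, w i = 0) (hne : w ≠ 0) :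
    t ^ 2 = (d : ℝ) + a * t - b - b * t := by
  obtain ⟨i, hi⟩ : ∃ i, w i ≠ 0 := by
    by_contra hc
    push_neg at hc
    exact hne (funext hc)
  have hm := hsrg.matrix_eq (α := ℝ)
  have hmv := congrArg (fun M => Matrix.mulVec M w) hm
  rw [pow_two, ← Matrix.mulVec_mulVec, hw, Matrix.mulVec_smul, hw] at hmv
  rw [Matrix.add_mulVec, Matrix.add_mulVec, Matrix.smul_mulVec,
    Matrix.smul_mulVec, Matrix.smul_mulVec, Matrix.one_mulVec, hw,
    compl_adjMatrix_eq, Matrix.sub_mulVec, Matrix.sub_mulVec, Matrix.one_mulVec, hw] at hmv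
  have hJ : Matrix.mulVec (Matrix.of (fun _ _ => (1:ℝ)) : Matrix (Fin n) (Fin n) ℝ) w = 0 := by
    ext k
    simp [Matrix.mulVec, dotProduct, hsum]
  rw [hJ] at hmv
  have h0 := congrFun hmv i
  simp only [Pi.smul_apply, Pi.add_apply, Pi.sub_apply, Pi.zero_apply, smul_eq_mul,
    nsmul_eq_mul, Pi.mul_apply, Pi.natCast_apply] at h0
  have key : (t ^ 2 - ((d : ℝ) + a * t - b - b * t)) * w i = 0 := by
    linear_combination h0
  rcases mul_eq_zero.1 key with h | h
  · linarith
  · exact absurd h hi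

lemma eig_sum_zero {n : ℕ} (H : SimpleGraph (Fin n)) [DecidableRel H.Adj] {d : ℕ}
    (hreg : H.IsRegularOfDegree d) {t : ℝ} {w : Fin n → ℝ}
    (hw : (H.adjMatrix ℝ).mulVec w = t • w) (ht : t ≠ (d : ℝ)) : ∑ i, w i = 0 := by
  have h1 : ∑ i, (H.adjMatrix ℝ).mulVec w i = d * ∑ i, w i := sum_mulVec_adj H hreg w
  rw [hw] at h1
  simp only [Pi.smul_apply, smul_eq_mul, ← Finset.mul_sum] at h1
  have : (t - d) * ∑ i, w i = 0 := by linarith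
  rcases mul_eq_zero.1 this with h | h
  · exact absurd (by linarith : t = (d:ℝ)) ht
  · exact h

lemma cone_vec_eig {n : ℕ} (H : SimpleGraph (Fin n)) [DecidableRel H.Adj] {d : ℕ}
    (hreg : H.IsRegularOfDegree d) (t : ℝ) (hq : (n : ℝ) + d * t = t * t) :
    (coneM H).mulVec (fun o => o.elim (n : ℝ) (fun _ => t)) =
      t • ((fun o => o.elim (n : ℝ) (fun _ => t)) : Option (Fin n) → ℝ) := by
  ext o
  cases o with
  | none =>
    rw [coneM_mulVec_none]
    simp [Finset.sum_const, Finset.card_univ, mul_comm]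
  | some i =>
    rw [coneM_mulVec_some]
    have hc : (H.adjMatrix ℝ).mulVec (fun _ => t) i = d * t :=
      SimpleGraph.adjMatrix_mulVec_const_apply_of_regular hreg
    simp only [Option.elim, Pi.smul_apply, smul_eq_mul]
    rw [hc]
    linarith [hq]

theorem stmt19 {n : ℕ} (H : SimpleGraph (Fin n)) [DecidableRel H.Adj]
    (d a b : ℕ) (hsrg : H.IsSRGWith n d a b)
    (ν mu lam : ℝ) (hν : ν = (d : ℝ))
    (h1 : IsEig (H.adjMatrix ℝ) ν) (h2 : IsEig (H.adjMatrix ℝ) mu)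
    (h3 : IsEig (H.adjMatrix ℝ) lam)
    (hall : ∀ x, IsEig (H.adjMatrix ℝ) x → x = ν ∨ x = mu ∨ x = lam)
    (hord1 : ν > mu) (hord2 : mu > lam)
    (heq : lam * (ν - lam) = -(n : ℝ)) :
    {x : ℝ | IsEig (coneM H) x}.ncard = 3 ∧
    ∃ ρ : ℝ, IsEig (coneM H) ρ ∧ (∀ x, IsEig (coneM H) x → x ≤ ρ) ∧
      IsMainEig (coneM H) ρ ∧ IsMainEig (coneM H) lam ∧
      ¬ IsMainEig (coneM H) mu ∧
      (∀ x, IsMainEig (coneM H) x → x = ρ ∨ x = lam) := by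
  subst hν
  have hreg := hsrg.regular
  -- n is nonzero
  have hn0 : n ≠ 0 := by
    rintro rfl
    exact h1 (Subsingleton.elim _ _)
  have hnR : (0 : ℝ) < n := by
    have := Nat.pos_of_ne_zero hn0
    exact_mod_cast this
  have hlam_lt_d : lam < (d : ℝ) := lt_trans hord2 hord1
  have hlamneg : lam < 0 := by nlinarith [heq, hnR, hlam_lt_d]
  have hquad_lam : (n : ℝ) + d * lam = lam * lam := by linear_combination heq
  have hqr : (n : ℝ) + d * ((d : ℝ) - lam) = ((d : ℝ) - lam) * ((d : ℝ) - lam) := by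
    linear_combination heq
  have hrho_gt_d : (d : ℝ) < (d : ℝ) - lam := by linarith
  have hd0 : (0 : ℝ) ≤ (d : ℝ) := Nat.cast_nonneg d
  -- eigenvectors of A for mu and lam
  obtain ⟨ymu, hymu0, hymu⟩ := (isEig_iff _ mu).1 h2
  have hsum_mu : ∑ i, ymu i = 0 := eig_sum_zero H hreg hymu (ne_of_lt hord1)
  have hqmu : mu ^ 2 = (d : ℝ) + a * mu - b - b * mu := srg_quad H hsrg mu ymu hymu hsum_mu hymu0
  obtain ⟨ylam, hylam0, hylam⟩ := (isEig_iff _ lam).1 h3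
  have hsum_lam : ∑ i, ylam i = 0 := eig_sum_zero H hreg hylam (ne_of_lt hlam_lt_d)
  have hqlam : lam ^ 2 = (d : ℝ) + a * lam - b - b * lam :=
    srg_quad H hsrg lam ylam hylam hsum_lam hylam0
  have hmulam : mu ≠ lam := ne_of_gt hord2
  -- classification of roots of the SRG quadratic
  have hroots : ∀ t : ℝ, t ^ 2 = (d : ℝ) + a * t - b - b * t → t = mu ∨ t = lam := by
    intro t ht
    have hsum : (a : ℝ) - b = mu + lam := by
      have key : ((mu + lam) - ((a : ℝ) - b)) * (mu - lam) = 0 := by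
        linear_combination hqmu - hqlam
      rcases mul_eq_zero.1 key with h | h
      · linarith
      · exact absurd h (sub_ne_zero.2 hmulam)
    have hprod : (d : ℝ) - b = -(mu * lam) := by linear_combination -hqmu - mu * hsum
    have key : (t - mu) * (t - lam) = 0 := by linear_combination ht + t * hsum + hprod
    rcases mul_eq_zero.1 key with h | h
    · exact Or.inl (by linarith)
    · exact Or.inr (by linarith)
  -- lam is not -1
  have hlam_ne : lam ≠ -1 := by
    intro hl
    have hnd : n = d + 1 := by
      have : (n : ℝ) = (d : ℝ) + 1 := by rw [hl] at hquad_lam; linarith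
      exact_mod_cast this
    have hcomp : ∀ i : Fin n, H.neighborFinset i = Finset.univ.erase i := by
      intro i
      apply Finset.eq_of_subset_of_card_le
      · intro j hj
        rw [SimpleGraph.mem_neighborFinset] at hj
        exact Finset.mem_erase.2 ⟨hj.ne', Finset.mem_univ j⟩
      · have hdeg : (H.neighborFinset i).card = d := hreg i
        rw [Finset.card_erase_of_mem (Finset.mem_univ i), Finset.card_univ, Fintype.card_fin,
          hdeg]
        omega
    obtain ⟨i, hi⟩ : ∃ i, ymu i ≠ 0 := by
      by_contra hc
      push_neg at hc
      exact hymu0 (funext hc)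
    have hv : (H.adjMatrix ℝ).mulVec ymu i = (∑ j, ymu j) - ymu i := by
      rw [SimpleGraph.adjMatrix_mulVec_apply, hcomp i,
        Finset.sum_erase_eq_sub (Finset.mem_univ i)]
    have := congrFun hymu i
    rw [hv, hsum_mu] at this
    simp only [Pi.smul_apply, smul_eq_mul] at this
    have hmu1 : (mu + 1) * ymu i = 0 := by linarith
    rcases mul_eq_zero.1 hmu1 with h | h
    · have : mu = -1 := by linarith
      rw [this, hl] at hord2; exact lt_irrefl _ hord2
    · exact hi h
  -- key computation for eigenvectors of the cone
  have hkey : ∀ (t : ℝ) (x : Option (Fin n) → ℝ), (coneM H).mulVec x = t • x →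
      (x none) * (t * t - d * t - n) = 0 ∧ (∑ j, x (some j)) = t * x none ∧
      (∀ i, x none + (H.adjMatrix ℝ).mulVec (fun j => x (some j)) i = t * x (some i)) := by
    intro t x hx
    have hnone := congrFun hx none
    rw [coneM_mulVec_none] at hnone
    simp only [Pi.smul_apply, smul_eq_mul] at hnone
    have hsome : ∀ i, x none + (H.adjMatrix ℝ).mulVec (fun j => x (some j)) i
        = t * x (some i) := by
      intro i
      have := congrFun hx (some i)
      rw [coneM_mulVec_some] at this
      simpa using this
    refine ⟨?_, hnone, hsome⟩
    have hsumeq : ∑ i, (x none + (H.adjMatrix ℝ).mulVec (fun j => x (some j)) i)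
        = ∑ i, t * x (some i) := Finset.sum_congr rfl fun i _ => hsome i
    rw [Finset.sum_add_distrib, Finset.sum_const, Finset.card_univ, Fintype.card_fin,
      sum_mulVec_adj H hreg, ← Finset.mul_sum, hnone] at hsumeq
    have : (n : ℝ) * x none + d * (t * x none) = t * (t * x none) := by
      rw [nsmul_eq_mul] at hsumeq; linarith
    linear_combination -this
  -- every eigenvalue of the cone is ρ, mu or lam
  have hsub : ∀ t, IsEig (coneM H) t → t = ((d : ℝ) - lam) ∨ t = mu ∨ t = lam := by
    intro t ht
    obtain ⟨x, hx0, hx⟩ := (isEig_iff _ t).1 ht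
    obtain ⟨k1, k2, k3⟩ := hkey t x hx
    by_cases hq : t * t - d * t - n = 0
    · have key : (t - ((d : ℝ) - lam)) * (t - lam) = 0 := by
        linear_combination hq + hquad_lam
      rcases mul_eq_zero.1 key with h | h
      · exact Or.inl (by linarith)
      · exact Or.inr (Or.inr (by linarith))
    · have hs : x none = 0 := by
        rcases mul_eq_zero.1 k1 with h | h
        · exact h
        · exact absurd h hq
      have hAy : (H.adjMatrix ℝ).mulVec (fun j => x (some j)) = t • (fun j => x (some j)) := by
        ext i
        have := k3 i
        rw [hs] at this
        simpa using this
      have hy0 : (fun j => x (some j)) ≠ 0 := by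
        intro hz
        apply hx0
        funext o
        cases o with
        | none => exact hs
        | some i => exact congrFun hz i
      have hsy : ∑ j, x (some j) = 0 := by rw [k2, hs, mul_zero]
      exact Or.inr (hroots t (srg_quad H hsrg t _ hAy hsy hy0))
  -- ρ is a main eigenvalue
  have hvrho := cone_vec_eig H hreg ((d : ℝ) - lam) hqr
  have hvlam := cone_vec_eig H hreg lam hquad_lam
  have hvne : ∀ t : ℝ, ((fun o => o.elim (n : ℝ) (fun _ => t)) : Option (Fin n) → ℝ) ≠ 0 := by
    intro t hz
    have := congrFun hz none
    simp only [Option.elim, Pi.zero_apply] at this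
    exact absurd this (ne_of_gt hnR)
  have hvsum : ∀ t : ℝ, ∑ o : Option (Fin n),
      ((fun o => o.elim (n : ℝ) (fun _ => t)) : Option (Fin n) → ℝ) o = n * (1 + t) := by
    intro t
    rw [Fintype.sum_option]
    simp only [Option.elim]
    rw [Finset.sum_const, Finset.card_univ, Fintype.card_fin, nsmul_eq_mul]
    ring
  have heig_rho : IsEig (coneM H) ((d : ℝ) - lam) :=
    (isEig_iff _ _).2 ⟨_, hvne _, hvrho⟩
  have hmain_rho : IsMainEig (coneM H) ((d : ℝ) - lam) := by
    refine ⟨_, (mem_eigSpace _ _ _).2 hvrho, ?_⟩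
    rw [hvsum]
    have : (0:ℝ) < 1 + ((d : ℝ) - lam) := by linarith
    positivity
  have hmain_lam : IsMainEig (coneM H) lam := by
    refine ⟨_, (mem_eigSpace _ _ _).2 hvlam, ?_⟩
    rw [hvsum]
    intro hz
    rcases mul_eq_zero.1 hz with h | h
    · exact absurd h (ne_of_gt hnR)
    · exact hlam_ne (by linarith)
  have heig_lam : IsEig (coneM H) lam := (isEig_iff _ _).2 ⟨_, hvne _, hvlam⟩
  -- mu is an eigenvalue of the cone
  have heig_mu : IsEig (coneM H) mu := by
    refine (isEig_iff _ _).2 ⟨(fun o => o.elim 0 ymu), ?_, ?_⟩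
    · intro hz
      apply hymu0
      funext i
      exact congrFun hz (some i)
    · ext o
      cases o with
      | none =>
        rw [coneM_mulVec_none]
        simp only [Option.elim, Pi.smul_apply, smul_eq_mul]
        rw [hsum_mu, mul_zero]
      | some i =>
        rw [coneM_mulVec_some]
        simp only [Option.elim, Pi.smul_apply, smul_eq_mul]
        rw [zero_add]
        have := congrFun hymu i
        simpa using this
  -- mu is not main
  have hnotmain_mu : ¬ IsMainEig (coneM H) mu := by
    rintro ⟨x, hxmem, hxsum⟩
    have hx := (mem_eigSpace _ _ _).1 hxmem
    obtain ⟨k1, k2, -⟩ := hkey mu x hx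
    have hmune : mu * mu - d * mu - n ≠ 0 := by
      intro h
      have key : (mu - ((d : ℝ) - lam)) * (mu - lam) = 0 := by
        linear_combination h + hquad_lam
      rcases mul_eq_zero.1 key with h' | h'
      · have : mu = (d : ℝ) - lam := by linarith
        linarith
      · exact hmulam (by linarith)
    have hs : x none = 0 := by
      rcases mul_eq_zero.1 k1 with h | h
      · exact h
      · exact absurd h hmune
    apply hxsum
    rw [Fintype.sum_option, hs, k2, hs, mul_zero, zero_add]
  -- distinctness
  have hne1 : (d : ℝ) - lam ≠ mu := by intro h; linarith
  have hne2 : (d : ℝ) - lam ≠ lam := by intro h; linarith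
  constructor
  · have hset : {x : ℝ | IsEig (coneM H) x} = {(d : ℝ) - lam, mu, lam} := by
      ext t
      simp only [Set.mem_setOf_eq, Set.mem_insert_iff, Set.mem_singleton_iff]
      constructor
      · exact hsub t
      · rintro (rfl | rfl | rfl)
        · exact heig_rho
        · exact heig_mu
        · exact heig_lam
    rw [hset, Set.ncard_insert_of_notMem (by simp [hne1, hne2]),
      Set.ncard_pair hmulam]
  · refine ⟨(d : ℝ) - lam, heig_rho, ?_, hmain_rho, hmain_lam, hnotmain_mu, ?_⟩
    · intro x hx
      rcases hsub x hx with rfl | rfl | rfl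
      · exact le_refl _
      · linarith
      · linarith
    · intro x hx
      have hx' : IsEig (coneM H) x := by
        obtain ⟨v, hvmem, hvsum'⟩ := hx
        rw [IsEig, Submodule.ne_bot_iff]
        refine ⟨v, hvmem, ?_⟩
        intro hz
        apply hvsum'
        rw [hz]
        simp
      rcases hsub x hx' with rfl | rfl | rfl
      · exact Or.inl rfl
      · exact absurd hx hnotmain_mu
      · exact Or.inr rfl
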